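/- Let Ψ : ℝ⁴ → ℝ⁴ be defined coordinatewise by Ψᵢ(X) = Rᵢ(X)·Fᵢ(xᵢ) + (1-Rᵢ(X))·xᵢ, where each Fᵢ is a C^∞ diffeomorphism of ℝ that is the identity outside I₀ = [-λ³, λ³] and maps I₀ onto I₀ with strictly positive derivative, and Rᵢ(X) is the product of bump functions ρ₁(x_j) over j ≠ i, where ρ₁ ∈ [0,1] equals 1 on I₀ and 0 outside [-λ³-1, λ³+1]. Then Ψ is a bijection of ℝ⁴. -/

import Mathlib

open Set

lemma aux_g_bij (lam : ℝ) (F : ℝ → ℝ) (F' : ℝ → ℝ)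
    (hFid : ∀ t : ℝ, t ∉ Icc (-lam ^ 3) (lam ^ 3) → F t = t)
    (hFderiv : ∀ t : ℝ, HasDerivAt F (F' t) t ∧ 0 < F' t)
    (r : ℝ) (hr : r ∈ Icc (0:ℝ) 1) :
    Function.Bijective (fun x => r * F x + (1 - r) * x) := by
  set g : ℝ → ℝ := fun x => r * F x + (1 - r) * x with hgdef
  have hgderiv : ∀ x, HasDerivAt g (r * F' x + (1 - r)) x := by
    intro x
    have h1 := ((hFderiv x).1.const_mul r)
    have h2 : HasDerivAt (fun x : ℝ => (1 - r) * x) (1 - r) x := by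
      simpa using (hasDerivAt_id x).const_mul (1 - r)
    exact h1.add h2
  have hpos : ∀ x, 0 < r * F' x + (1 - r) := by
    intro x
    rcases hr.1.eq_or_lt with h | h
    · simp [← h]
    · have := (hFderiv x).2
      nlinarith [hr.2]
  have hmono : StrictMono g := by
    apply strictMono_of_deriv_pos
    intro x
    rw [(hgderiv x).deriv]
    exact hpos x
  have hcont : Continuous g := by
    rw [continuous_iff_continuousAt]
    exact fun x => (hgderiv x).continuousAt
  refine ⟨hmono.injective, ?_⟩
  intro y
  set a := min y (-lam ^ 3 - 1) with ha
  set b := max y (lam ^ 3 + 1) with hb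
  have hFa : F a = a := by
    apply hFid
    intro hmem
    have := hmem.1
    have : a ≤ -lam ^ 3 - 1 := min_le_right _ _
    linarith [hmem.1]
  have hFb : F b = b := by
    apply hFid
    intro hmem
    have : lam ^ 3 + 1 ≤ b := le_max_right _ _
    linarith [hmem.2]
  have hga : g a = a := by simp [hgdef, hFa]; ring
  have hgb : g b = b := by simp [hgdef, hFb]; ring
  have hab : a ≤ b := le_trans (min_le_left _ _) (le_max_left _ _)
  have hy : y ∈ Icc (g a) (g b) := by
    rw [hga, hgb]
    exact ⟨min_le_left _ _, le_max_left _ _⟩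
  obtain ⟨x, _, hx⟩ := intermediate_value_Icc hab hcont.continuousOn hy
  exact ⟨x, hx⟩

/-- The interpolated map `Ψᵢ(X) = Rᵢ(X)·Fᵢ(xᵢ) + (1-Rᵢ(X))·xᵢ`, where each `Fᵢ`
is a `C^∞` diffeomorphism of `ℝ` equal to the identity outside `I₀ = [-λ³, λ³]`
mapping `I₀` onto itself with positive derivative, and `Rᵢ` is a product of
bump functions of the other coordinates, is a bijection of `ℝ⁴`. -/
theorem stmt_9 (lam : ℝ) (hlam : 20 < lam)
    (ρ₁ : ℝ → ℝ) (hρsmooth : ContDiff ℝ (⊤ : ℕ∞) ρ₁)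
    (hρ01 : ∀ t, ρ₁ t ∈ Icc (0:ℝ) 1)
    (hρ1 : ∀ t ∈ Icc (-lam ^ 3) (lam ^ 3), ρ₁ t = 1)
    (hρ0 : ∀ t : ℝ, t ∉ Icc (-lam ^ 3 - 1) (lam ^ 3 + 1) → ρ₁ t = 0)
    (F : Fin 4 → (ℝ → ℝ)) (F' : Fin 4 → (ℝ → ℝ))
    (hFsmooth : ∀ i, ContDiff ℝ (⊤ : ℕ∞) (F i))
    (hFbij : ∀ i, Function.Bijective (F i))
    (hFid : ∀ i, ∀ t : ℝ, t ∉ Icc (-lam ^ 3) (lam ^ 3) → F i t = t)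
    (hFmaps : ∀ i, F i '' Icc (-lam ^ 3) (lam ^ 3) = Icc (-lam ^ 3) (lam ^ 3))
    (hFderiv : ∀ i, ∀ t : ℝ, HasDerivAt (F i) (F' i t) t ∧ 0 < F' i t)
    (R : Fin 4 → (Fin 4 → ℝ) → ℝ)
    (hR : ∀ i X, R i X = ∏ j ∈ Finset.univ.erase i, ρ₁ (X j))
    (Ψ : (Fin 4 → ℝ) → (Fin 4 → ℝ))
    (hΨ : ∀ X i, Ψ X i = R i X * F i (X i) + (1 - R i X) * X i) :
    Function.Bijective Ψ := by
  -- the one-dimensional interpolated maps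
  set G : Fin 4 → ℝ → ℝ → ℝ := fun i r x => r * F i x + (1 - r) * x with hG
  have hRmem : ∀ i X, R i X ∈ Icc (0:ℝ) 1 := by
    intro i X
    rw [hR]
    constructor
    · exact Finset.prod_nonneg fun j _ => (hρ01 (X j)).1
    · exact Finset.prod_le_one (fun j _ => (hρ01 (X j)).1) (fun j _ => (hρ01 (X j)).2)
  have hGbij : ∀ i X, Function.Bijective (G i (R i X)) :=
    fun i X => aux_g_bij lam (F i) (F' i) (hFid i) (hFderiv i) (R i X) (hRmem i X)
  have hΨ' : ∀ X i, Ψ X i = G i (R i X) (X i) := fun X i => hΨ X i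
  -- ρ₁ is preserved by each G
  have hρG : ∀ i X x, ρ₁ (G i (R i X) x) = ρ₁ x := by
    intro i X x
    by_cases hx : x ∈ Icc (-lam ^ 3) (lam ^ 3)
    · have hFx : F i x ∈ Icc (-lam ^ 3) (lam ^ 3) := by
        rw [← hFmaps i]; exact mem_image_of_mem _ hx
      have hr := hRmem i X
      have hGx : G i (R i X) x ∈ Icc (-lam ^ 3) (lam ^ 3) := by
        simp only [hG]
        constructor
        · nlinarith [hr.1, hr.2, hFx.1, hx.1]
        · nlinarith [hr.1, hr.2, hFx.2, hx.2]
      rw [hρ1 _ hGx, hρ1 _ hx]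
    · have : G i (R i X) x = x := by
        simp only [hG, hFid i x hx]; ring
      rw [this]
  have hρΨ : ∀ X j, ρ₁ (Ψ X j) = ρ₁ (X j) := by
    intro X j; rw [hΨ' X j]; exact hρG j X (X j)
  have hRΨ : ∀ i X, R i (Ψ X) = R i X := by
    intro i X; rw [hR, hR]
    exact Finset.prod_congr rfl fun j _ => hρΨ X j
  -- the inverse map
  set Φ : (Fin 4 → ℝ) → Fin 4 → ℝ :=
    fun Y i => Function.invFun (G i (R i Y)) (Y i) with hΦ
  have hleft : ∀ i X x, Function.invFun (G i (R i X)) (G i (R i X) x) = x :=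
    fun i X x => Function.leftInverse_invFun (hGbij i X).injective x
  have hright : ∀ i X y, G i (R i X) (Function.invFun (G i (R i X)) y) = y :=
    fun i X y => Function.rightInverse_invFun (hGbij i X).surjective y
  have hρΦ : ∀ Y j, ρ₁ (Φ Y j) = ρ₁ (Y j) := by
    intro Y j
    have h1 : ρ₁ (G j (R j Y) (Φ Y j)) = ρ₁ (Φ Y j) := hρG j Y (Φ Y j)
    have h2 : G j (R j Y) (Φ Y j) = Y j := hright j Y (Y j)
    rw [← h1, h2]
  have hRΦ : ∀ i Y, R i (Φ Y) = R i Y := by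
    intro i Y; rw [hR, hR]
    exact Finset.prod_congr rfl fun j _ => hρΦ Y j
  rw [Function.bijective_iff_has_inverse]
  refine ⟨Φ, ?_, ?_⟩
  · intro X
    funext i
    show Function.invFun (G i (R i (Ψ X))) (Ψ X i) = X i
    rw [hRΨ i X, hΨ' X i]
    exact hleft i X (X i)
  · intro Y
    funext i
    rw [hΨ' (Φ Y) i, hRΦ i Y]
    exact hright i Y (Y i)
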